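/- Let ψ be a branching mechanism of Lévy–Khintchine form. If γ > 1, then ∫_1^∞ (∫_1^b ψ(a) da)^{−1/2} db < ∞ (Sheu's integral condition holds). -/
import Mathlib


open MeasureTheory Filter Set

noncomputable section

/-- The branching mechanism `ψ(λ) = αλ + βλ² + ∫_{(0,∞)} (e^{−λr} − 1 + λr) π(dr)`. -/
def psiFun (α β : ℝ) (π : Measure ℝ) : ℝ → ℝ := fun l =>
  α * l + β * l ^ 2 + ∫ r, (Real.exp (-(l * r)) - 1 + l * r) ∂π

/-- `ψ′(λ) = α + 2βλ + ∫_{(0,∞)} r(1 − e^{−λr}) π(dr)`. -/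
def psiDeriv (α β : ℝ) (π : Measure ℝ) : ℝ → ℝ := fun l =>
  α + 2 * β * l + ∫ r, r * (1 - Real.exp (-(l * r))) ∂π

/-- `(α, β, π)` is the datum of a (sub)critical branching mechanism of
Lévy–Khintchine form: `α, β ≥ 0`, `π` is a Borel measure carried by `(0,∞)`
with `∫ min(r, r²) π(dr) < ∞`. -/
structure IsBranchingMechanism (α β : ℝ) (π : Measure ℝ) : Prop where
  alpha_nonneg : 0 ≤ α
  beta_nonneg : 0 ≤ β
  carried_on_pos : π (Set.Iic 0) = 0
  integ_min : Integrable (fun r => min r (r ^ 2)) π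

/-- The lower index `γ_f = sup {c ≥ 0 : f(λ)λ^{−c} → ∞}` (with `sup ∅ = 0`). -/
def lowerIndex (f : ℝ → ℝ) : ℝ :=
  sSup {c : ℝ | 0 ≤ c ∧ Tendsto (fun l : ℝ => f l * l ^ (-c)) atTop atTop}

/-- The upper index `η_f = inf {c ≥ 0 : f(λ)λ^{−c} → 0}`. -/
def upperIndex (f : ℝ → ℝ) : ℝ :=
  sInf {c : ℝ | 0 ≤ c ∧ Tendsto (fun l : ℝ => f l * l ^ (-c)) atTop (nhds 0)}

/-- `δ_f = sup {c ≥ 0 : ∃ C > 0, ∀ 1 ≤ μ ≤ λ, C f(μ)μ^{−c} ≤ f(λ)λ^{−c}}`. -/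
def deltaIndex (f : ℝ → ℝ) : ℝ :=
  sSup {c : ℝ | 0 ≤ c ∧ ∃ C : ℝ, 0 < C ∧
    ∀ μ l : ℝ, 1 ≤ μ → μ ≤ l → C * (f μ * μ ^ (-c)) ≤ f l * l ^ (-c)}

namespace Statement9Aux

lemma exp_aux_nonneg (x : ℝ) : 0 ≤ Real.exp (-x) - 1 + x := by
  nlinarith [Real.add_one_le_exp (-x)]

lemma exp_aux_le_lin {x : ℝ} (hx : 0 ≤ x) : Real.exp (-x) - 1 + x ≤ x := by
  have h : Real.exp (-x) ≤ Real.exp 0 := Real.exp_le_exp.2 (by linarith)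
  rw [Real.exp_zero] at h; linarith

lemma exp_aux_le_sq {x : ℝ} (hx : 0 ≤ x) : Real.exp (-x) - 1 + x ≤ x ^ 2 := by
  have h4 : Real.exp x * Real.exp (-x) = 1 := by rw [← Real.exp_add]; simp
  nlinarith [mul_le_mul_of_nonneg_right (Real.add_one_le_exp x) (Real.exp_pos (-x)).le,
    Real.add_one_le_exp (-x), (Real.exp_pos (-x)).le]

lemma exp_aux_mono {x y : ℝ} (hx : 0 ≤ x) (hxy : x ≤ y) :
    Real.exp (-x) - 1 + x ≤ Real.exp (-y) - 1 + y := by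
  have hprod : Real.exp (-y) = Real.exp (-x) * Real.exp (x - y) := by
    rw [← Real.exp_add]; ring_nf
  have h1 : Real.exp (-x) ≤ 1 := by
    have := Real.exp_le_exp.2 (neg_nonpos.2 hx); simpa using this
  have h2 := Real.add_one_le_exp (x - y)
  have h3 : Real.exp (x - y) ≤ 1 := by
    have := Real.exp_le_exp.2 (show x - y ≤ 0 by linarith); simpa using this
  nlinarith [(Real.exp_pos (-x)).le]

lemma exp_aux_pos {r : ℝ} (hr : r ≠ 0) : 0 < Real.exp (-r) - 1 + r := by
  nlinarith [Real.add_one_lt_exp (neg_ne_zero.2 hr)]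

variable {α β : ℝ} {π : Measure ℝ}

lemma ae_pos (h : IsBranchingMechanism α β π) : ∀ᵐ r ∂π, 0 < r := by
  rw [ae_iff]
  have hs : {r : ℝ | ¬ 0 < r} = Iic 0 := by ext r; simp [not_lt]
  rw [hs]; exact h.carried_on_pos

lemma f_bound {l r : ℝ} (hl : 0 ≤ l) (hr : 0 < r) :
    Real.exp (-(l * r)) - 1 + l * r ≤ (l + l ^ 2) * min r (r ^ 2) := by
  rcases le_total r 1 with h1 | h1
  · have hmin : min r (r ^ 2) = r ^ 2 := min_eq_right (by nlinarith)
    have h2 := exp_aux_le_sq (mul_nonneg hl hr.le)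
    rw [hmin]; nlinarith
  · have hmin : min r (r ^ 2) = r := min_eq_left (by nlinarith)
    have h2 := exp_aux_le_lin (mul_nonneg hl hr.le)
    rw [hmin]; nlinarith

lemma integrand_integrable (h : IsBranchingMechanism α β π) {l : ℝ} (hl : 0 ≤ l) :
    Integrable (fun r => Real.exp (-(l * r)) - 1 + l * r) π := by
  refine (h.integ_min.const_mul (l + l ^ 2)).mono' ?_ ?_
  · exact Continuous.aestronglyMeasurable (by fun_prop)
  · filter_upwards [ae_pos h] with r hr
    rw [Real.norm_eq_abs, abs_of_nonneg (exp_aux_nonneg _)]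
    exact f_bound hl hr

lemma psi_nonneg (h : IsBranchingMechanism α β π) {l : ℝ} (hl : 0 ≤ l) :
    0 ≤ psiFun α β π l := by
  have hint : 0 ≤ ∫ r, (Real.exp (-(l * r)) - 1 + l * r) ∂π :=
    integral_nonneg fun r => exp_aux_nonneg _
  have h1 : 0 ≤ α * l := mul_nonneg h.alpha_nonneg hl
  have h2 : 0 ≤ β * l ^ 2 := mul_nonneg h.beta_nonneg (by positivity)
  unfold psiFun; linarith

lemma psi_mono (h : IsBranchingMechanism α β π) {l₁ l₂ : ℝ} (h0 : 0 ≤ l₁) (h12 : l₁ ≤ l₂) :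
    psiFun α β π l₁ ≤ psiFun α β π l₂ := by
  have hint : ∫ r, (Real.exp (-(l₁ * r)) - 1 + l₁ * r) ∂π
      ≤ ∫ r, (Real.exp (-(l₂ * r)) - 1 + l₂ * r) ∂π := by
    refine integral_mono_ae (integrand_integrable h h0) (integrand_integrable h (h0.trans h12)) ?_
    filter_upwards [ae_pos h] with r hr
    exact exp_aux_mono (mul_nonneg h0 hr.le) (by nlinarith)
  have h1 : α * l₁ ≤ α * l₂ := mul_le_mul_of_nonneg_left h12 h.alpha_nonneg
  have h2 : β * l₁ ^ 2 ≤ β * l₂ ^ 2 :=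
    mul_le_mul_of_nonneg_left (by nlinarith) h.beta_nonneg
  unfold psiFun; linarith

lemma psi_continuousOn (h : IsBranchingMechanism α β π) :
    ContinuousOn (psiFun α β π) (Ici 1) := by
  intro l₀ hl₀
  apply ContinuousAt.continuousWithinAt
  have hl₀1 : (1:ℝ) ≤ l₀ := hl₀
  have h1 : (0:ℝ) < l₀ := lt_of_lt_of_le one_pos hl₀1
  have hnb : Ioo (0:ℝ) (l₀ + 1) ∈ nhds l₀ := Ioo_mem_nhds h1 (by linarith)
  have hcont : ContinuousAt (fun l => ∫ r, (Real.exp (-(l * r)) - 1 + l * r) ∂π) l₀ := by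
    apply continuousAt_of_dominated (bound := fun r => ((l₀ + 1) + (l₀ + 1) ^ 2) * min r (r ^ 2))
    · filter_upwards with l
      exact Continuous.aestronglyMeasurable (by fun_prop)
    · filter_upwards [hnb] with l hl
      filter_upwards [ae_pos h] with r hr
      rw [Real.norm_eq_abs, abs_of_nonneg (exp_aux_nonneg _)]
      calc Real.exp (-(l * r)) - 1 + l * r ≤ (l + l ^ 2) * min r (r ^ 2) := f_bound hl.1.le hr
        _ ≤ ((l₀ + 1) + (l₀ + 1) ^ 2) * min r (r ^ 2) := by
            have hm : 0 ≤ min r (r ^ 2) := le_min hr.le (by positivity)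
            have hle : l + l ^ 2 ≤ (l₀ + 1) + (l₀ + 1) ^ 2 := by nlinarith [hl.1.le, hl.2.le]
            exact mul_le_mul_of_nonneg_right hle hm
    · exact h.integ_min.const_mul _
    · filter_upwards with r
      exact Continuous.continuousAt (by fun_prop)
  unfold psiFun
  exact ((continuousAt_const.mul continuousAt_id).add
    (continuousAt_const.mul (continuousAt_id.pow 2))).add hcont

lemma psi_intervalIntegrable (h : IsBranchingMechanism α β π) {a b : ℝ}
    (ha : 1 ≤ a) (hb : 1 ≤ b) : IntervalIntegrable (psiFun α β π) volume a b :=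
  ((psi_continuousOn h).mono (fun x hx => le_trans (le_min ha hb) hx.1)).intervalIntegrable

lemma F_lb_one (h : IsBranchingMechanism α β π) {b : ℝ} (hb : 1 ≤ b) :
    psiFun α β π 1 * (b - 1) ≤ ∫ a in (1:ℝ)..b, psiFun α β π a := by
  have hmono := intervalIntegral.integral_mono_on hb (intervalIntegrable_const (c := psiFun α β π 1))
    (psi_intervalIntegrable h le_rfl hb) (fun x hx => psi_mono h zero_le_one hx.1)
  rwa [intervalIntegral.integral_const, smul_eq_mul, mul_comm] at hmono

lemma F_lb_pow (h : IsBranchingMechanism α β π) {c M b : ℝ} (hc : 0 ≤ c) (hM : 1 ≤ M)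
    (hpsi : ∀ l, M ≤ l → l ^ c ≤ psiFun α β π l) (hb : 2 * M ≤ b) :
    (b / 2) ^ (c + 1) ≤ ∫ a in (1:ℝ)..b, psiFun α β π a := by
  have hb2 : M ≤ b / 2 := by linarith
  have h1b2 : (1:ℝ) ≤ b / 2 := le_trans hM hb2
  have h1b : (1:ℝ) ≤ b := by linarith
  have hi1 := psi_intervalIntegrable h le_rfl h1b2
  have hi2 := psi_intervalIntegrable h h1b2 h1b
  have hadd := intervalIntegral.integral_add_adjacent_intervals hi1 hi2
  have hnn : 0 ≤ ∫ a in (1:ℝ)..(b / 2), psiFun α β π a :=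
    intervalIntegral.integral_nonneg h1b2 (fun u hu => psi_nonneg h (by linarith [hu.1]))
  have hmono : ∫ _ in (b / 2)..b, ((b / 2 : ℝ) ^ c : ℝ)
      ≤ ∫ a in (b / 2)..b, psiFun α β π a := by
    apply intervalIntegral.integral_mono_on (by linarith) (intervalIntegrable_const) hi2
    intro x hx
    calc (b / 2) ^ c ≤ x ^ c := Real.rpow_le_rpow (by linarith) hx.1 hc
      _ ≤ psiFun α β π x := hpsi x (le_trans hb2 hx.1)
  rw [intervalIntegral.integral_const, smul_eq_mul] at hmono
  have hkey : (b - b / 2) * (b / 2) ^ c = (b / 2) ^ (c + 1) := by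
    rw [Real.rpow_add_one (ne_of_gt (by linarith : (0:ℝ) < b / 2))]
    ring
  rw [hkey] at hmono
  linarith

lemma F_continuousOn (h : IsBranchingMechanism α β π) :
    ContinuousOn (fun b => ∫ a in (1:ℝ)..b, psiFun α β π a) (Ici 1) := by
  intro b₀ hb₀
  have hb₀1 : (1:ℝ) ≤ b₀ := hb₀
  have hInt : IntegrableOn (psiFun α β π) (Icc 1 (b₀ + 1)) volume := by
    have hii := psi_intervalIntegrable h le_rfl (show (1:ℝ) ≤ b₀ + 1 by linarith)
    rw [intervalIntegrable_iff_integrableOn_Icc_of_le (by linarith)] at hii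
    exact hii
  have hG := intervalIntegral.continuousOn_primitive hInt
  have hmem : Icc (1:ℝ) (b₀ + 1) ∈ nhdsWithin b₀ (Ici 1) := by
    apply mem_nhdsWithin.mpr
    exact ⟨Iio (b₀ + 1), isOpen_Iio, by simp, fun x hx => ⟨hx.2, hx.1.le⟩⟩
  have hcw : ContinuousWithinAt (fun x => ∫ t in Ioc (1:ℝ) x, psiFun α β π t) (Ici 1) b₀ :=
    (hG b₀ ⟨hb₀1, by linarith⟩).mono_of_mem_nhdsWithin hmem
  apply hcw.congr
  · intro x hx
    rw [intervalIntegral.integral_of_le (mem_Ici.mp hx)]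
  · rw [intervalIntegral.integral_of_le hb₀1]

lemma psi_zero_of_one_zero (h : IsBranchingMechanism α β π) (h0 : psiFun α β π 1 = 0) :
    ∀ l, psiFun α β π l = 0 := by
  have hint : Integrable (fun r => Real.exp (-(1 * r)) - 1 + 1 * r) π :=
    integrand_integrable h zero_le_one
  have hα := h.alpha_nonneg
  have hβ := h.beta_nonneg
  have hI : 0 ≤ ∫ r, (Real.exp (-(1 * r)) - 1 + 1 * r) ∂π :=
    integral_nonneg fun r => exp_aux_nonneg _
  unfold psiFun at h0
  have hIz : ∫ r, (Real.exp (-(1 * r)) - 1 + 1 * r) ∂π = 0 := by nlinarith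
  have hzero := (integral_eq_zero_iff_of_nonneg_ae
    (Eventually.of_forall fun r => exp_aux_nonneg _) hint).mp hIz
  have hfalse : ∀ᵐ r ∂π, False := by
    filter_upwards [hzero, ae_pos h] with r h1 h2
    simp only [Pi.zero_apply, one_mul] at h1
    have := exp_aux_pos (ne_of_gt h2)
    linarith
  have hπ : π = 0 := ae_eq_bot.mp (eventually_false_iff_eq_bot.mp hfalse)
  have hα0 : α = 0 := by nlinarith
  have hβ0 : β = 0 := by nlinarith
  intro l
  unfold psiFun
  rw [hα0, hβ0, hπ]
  simp

end Statement9Aux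

open Statement9Aux

set_option maxHeartbeats 1000000 in
/-- if γ > 1 then Sheu's condition ∫_1^∞ (∫_1^b ψ(a) da)^{−1/2} db < ∞
holds. -/
theorem statement9 (α β : ℝ) (π : Measure ℝ) (h : IsBranchingMechanism α β π)
    (hγ : 1 < lowerIndex (psiFun α β π)) :
    IntegrableOn
      (fun b => (∫ a in (1 : ℝ)..b, psiFun α β π a) ^ (-(1 : ℝ) / 2))
      (Set.Ici 1) := by
  -- Step 1: extract an exponent c > 1 with ψ(l) l^{-c} → ∞
  obtain ⟨c, ⟨hc0, hct⟩, hc1⟩ :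
      ∃ c : ℝ, (0 ≤ c ∧ Tendsto (fun l : ℝ => psiFun α β π l * l ^ (-c)) atTop atTop) ∧ 1 < c := by
    by_contra hcon
    push_neg at hcon
    have hle : lowerIndex (psiFun α β π) ≤ 1 := by
      apply Real.sSup_le _ zero_le_one
      intro x hx
      exact hcon x ⟨hx.1, hx.2⟩
    linarith
  -- Step 2: ψ(1) > 0
  have hψ1 : 0 < psiFun α β π 1 := by
    rcases lt_or_eq_of_le (psi_nonneg h zero_le_one) with hp | hp
    · exact hp
    · exfalso
      have hz := psi_zero_of_one_zero h hp.symm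
      obtain ⟨N, hN⟩ := eventually_atTop.mp (hct.eventually_ge_atTop 1)
      have hcontr := hN (max N 1) (le_max_left _ _)
      rw [hz] at hcontr
      simp at hcontr
      linarith
  -- Step 3: eventual lower bound ψ(l) ≥ l^c
  obtain ⟨M₀, hM₀⟩ := eventually_atTop.mp (hct.eventually_ge_atTop 1)
  set M := max M₀ 1 with hMdef
  have hM1 : (1:ℝ) ≤ M := le_max_right _ _
  have hpsi_lb : ∀ l, M ≤ l → l ^ c ≤ psiFun α β π l := by
    intro l hl
    have hl1 : (1:ℝ) ≤ l := le_trans hM1 hl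
    have hl0 : (0:ℝ) < l := by linarith
    have h1 := hM₀ l (le_trans (le_max_left _ _) hl)
    rw [Real.rpow_neg hl0.le] at h1
    have hpow : (0:ℝ) < l ^ c := Real.rpow_pos_of_pos hl0 c
    have h2 := mul_le_mul_of_nonneg_right h1 hpow.le
    rw [one_mul, mul_assoc, inv_mul_cancel₀ (ne_of_gt hpow), mul_one] at h2
    exact h2
  set T := 2 * M with hTdef
  have hT1 : (1:ℝ) < T := by
    have : (2:ℝ) ≤ 2 * M := by linarith
    linarith
  -- measurability
  have hFc : ContinuousOn (fun b => ∫ a in (1:ℝ)..b, psiFun α β π a) (Ici 1) :=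
    F_continuousOn h
  have hmeasRpow : Measurable fun p : ℝ × ℝ => p.1 ^ p.2 := by measurability
  have hmeas : AEStronglyMeasurable
      (fun b => (∫ a in (1:ℝ)..b, psiFun α β π a) ^ (-(1:ℝ) / 2))
      (volume.restrict (Ici 1)) := by
    have hFm : AEMeasurable (fun b => ∫ a in (1:ℝ)..b, psiFun α β π a)
        (volume.restrict (Ici 1)) := hFc.aemeasurable measurableSet_Ici
    exact (hmeasRpow.comp_aemeasurable (hFm.prodMk aemeasurable_const)).aestronglyMeasurable
  -- split the domain
  rw [integrableOn_Ici_iff_integrableOn_Ioi, ← Ioc_union_Ioi_eq_Ioi hT1.le]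
  refine IntegrableOn.union ?_ ?_
  · -- piece on (1, T]
    have hbound : IntegrableOn
        (fun b => (psiFun α β π 1) ^ (-(1:ℝ) / 2) * (b - 1) ^ (-(1:ℝ) / 2)) (Ioc 1 T) := by
      have h1 : IntervalIntegrable (fun x : ℝ => x ^ (-(1:ℝ) / 2)) volume 0 (T - 1) :=
        intervalIntegral.intervalIntegrable_rpow' (by norm_num)
      have h2 := h1.comp_sub_right 1
      rw [zero_add, sub_add_cancel] at h2
      exact ((intervalIntegrable_iff_integrableOn_Ioc_of_le hT1.le).mp h2).const_mul _
    refine Integrable.mono' hbound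
      (hmeas.mono_set (fun x hx => le_of_lt hx.1)) ?_
    rw [ae_restrict_iff' measurableSet_Ioc]
    filter_upwards with b hb
    have hb1 : (1:ℝ) < b := hb.1
    have hFlb := F_lb_one h hb1.le
    have hpos : 0 < psiFun α β π 1 * (b - 1) := mul_pos hψ1 (by linarith)
    have hFnn : (0:ℝ) ≤ ∫ a in (1:ℝ)..b, psiFun α β π a := le_trans hpos.le hFlb
    rw [Real.norm_eq_abs, abs_of_nonneg (Real.rpow_nonneg hFnn _)]
    calc (∫ a in (1:ℝ)..b, psiFun α β π a) ^ (-(1:ℝ) / 2)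
        ≤ (psiFun α β π 1 * (b - 1)) ^ (-(1:ℝ) / 2) :=
          Real.rpow_le_rpow_of_nonpos hpos hFlb (by norm_num)
      _ = (psiFun α β π 1) ^ (-(1:ℝ) / 2) * (b - 1) ^ (-(1:ℝ) / 2) :=
          Real.mul_rpow hψ1.le (by linarith)
  · -- piece on (T, ∞)
    have hbound : IntegrableOn
        (fun b => (2:ℝ) ^ ((c + 1) / 2) * b ^ (-((c + 1) / 2))) (Ioi T) :=
      (integrableOn_Ioi_rpow_of_lt (show -((c + 1) / 2) < -1 by linarith)
        (show (0:ℝ) < T by linarith)).const_mul _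
    refine Integrable.mono' hbound
      (hmeas.mono_set (fun x hx => le_of_lt (lt_of_le_of_lt hT1.le hx))) ?_
    rw [ae_restrict_iff' measurableSet_Ioi]
    filter_upwards with b hb
    have hbT : T < b := hb
    have hb2pos : (0:ℝ) < b / 2 := by linarith
    have hFlb : (b / 2) ^ (c + 1) ≤ ∫ a in (1:ℝ)..b, psiFun α β π a :=
      F_lb_pow h (by linarith) hM1 hpsi_lb (by linarith)
    have hpos : (0:ℝ) < (b / 2) ^ (c + 1) := Real.rpow_pos_of_pos hb2pos _
    have hFnn : (0:ℝ) ≤ ∫ a in (1:ℝ)..b, psiFun α β π a := le_trans hpos.le hFlb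
    rw [Real.norm_eq_abs, abs_of_nonneg (Real.rpow_nonneg hFnn _)]
    calc (∫ a in (1:ℝ)..b, psiFun α β π a) ^ (-(1:ℝ) / 2)
        ≤ ((b / 2) ^ (c + 1)) ^ (-(1:ℝ) / 2) :=
          Real.rpow_le_rpow_of_nonpos hpos hFlb (by norm_num)
      _ = (b / 2) ^ (-((c + 1) / 2)) := by
          rw [← Real.rpow_mul hb2pos.le]
          congr 1; ring
      _ = b ^ (-((c + 1) / 2)) / 2 ^ (-((c + 1) / 2)) :=
          Real.div_rpow (by linarith) (by norm_num) _
      _ = (2:ℝ) ^ ((c + 1) / 2) * b ^ (-((c + 1) / 2)) := by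
          rw [Real.rpow_neg (by norm_num : (0:ℝ) ≤ 2), div_eq_mul_inv, inv_inv]
          ring
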